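/- arXiv:1607.05635 — 5 statements merged into one kernel-verified Lean document; each statement's English description precedes it below -/
import Mathlib

section
/- Let C be a set-consensus collection that is complete for n. Then for every r with 1 ≤ r ≤ n, the dynamic-programming recurrence holds: AL_r^C = min{ j + AL_{r-ℓ}^C : (ℓ,j) ∈ C, ℓ ≤ r }, where the set over which the minimum is taken is nonempty since (1,1) ∈ C. -/
/-- A set-consensus collection: a finite set of pairs `(ℓ, j)` of positive integers
with `j ≤ ℓ`, containing `(1, 1)`. -/
def IsSCC (C : Finset (ℕ × ℕ)) : Prop :=
  (1, 1) ∈ C ∧ ∀ p ∈ C, 0 < p.2 ∧ p.2 ≤ p.1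

/-- The agreement level `AL_n^C`: the minimum of `∑ j·x(ℓ,j)` over all `x : C → ℕ`
with `∑ ℓ·x(ℓ,j) ≥ n`. -/
noncomputable def AL (C : Finset (ℕ × ℕ)) (n : ℕ) : ℕ :=
  sInf {k | ∃ x : ℕ × ℕ → ℕ, n ≤ ∑ p ∈ C, p.1 * x p ∧ k = ∑ p ∈ C, p.2 * x p}

/-- `C` is complete for `n`: for every `(ℓ, j) ∈ C` and every `r` with
`j ≤ r ≤ min ℓ n`, the pair `(r, j)` also belongs to `C`. -/
def CompleteFor (C : Finset (ℕ × ℕ)) (n : ℕ) : Prop :=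
  ∀ p ∈ C, ∀ r : ℕ, p.2 ≤ r → r ≤ min p.1 n → (r, p.2) ∈ C

lemma AL_le (C : Finset (ℕ × ℕ)) (n : ℕ) (x : ℕ × ℕ → ℕ)
    (h1 : n ≤ ∑ p ∈ C, p.1 * x p) : AL C n ≤ ∑ p ∈ C, p.2 * x p :=
  Nat.sInf_le ⟨x, h1, rfl⟩

lemma sum_ite_pt (C : Finset (ℕ × ℕ)) {p : ℕ × ℕ} (hp : p ∈ C) (m : ℕ) (f : ℕ × ℕ → ℕ) :
    ∑ q ∈ C, f q * (if q = p then m else 0) = f p * m := by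
  rw [Finset.sum_eq_single_of_mem p hp]
  · simp
  · intro b _ hb; rw [if_neg hb, mul_zero]

lemma AL_le_self (C : Finset (ℕ × ℕ)) (h11 : (1,1) ∈ C) (n : ℕ) : AL C n ≤ n := by
  have := AL_le C n (fun p => if p = (1,1) then n else 0)
    (by rw [sum_ite_pt C h11]; simp)
  rwa [sum_ite_pt C h11, show ((1:ℕ),(1:ℕ)).2 * n = n by simp] at this

lemma AL_zero (C : Finset (ℕ × ℕ)) : AL C 0 = 0 := by
  have := AL_le C 0 (fun _ => 0) (by simp)
  simpa using this

lemma AL_spec (C : Finset (ℕ × ℕ)) (h11 : (1,1) ∈ C) (n : ℕ) :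
    ∃ x : ℕ × ℕ → ℕ, n ≤ ∑ p ∈ C, p.1 * x p ∧ AL C n = ∑ p ∈ C, p.2 * x p := by
  have hne : {k | ∃ x : ℕ × ℕ → ℕ, n ≤ ∑ p ∈ C, p.1 * x p ∧
      k = ∑ p ∈ C, p.2 * x p}.Nonempty := by
    refine ⟨n, fun p => if p = (1,1) then n else 0, ?_, ?_⟩
    · rw [sum_ite_pt C h11]; simp
    · rw [sum_ite_pt C h11]; simp
  exact Nat.sInf_mem hne

theorem stmt_6 (C : Finset (ℕ × ℕ)) (hC : IsSCC C) (n : ℕ)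
    (hcomp : CompleteFor C n) (r : ℕ) (hr1 : 1 ≤ r) (hrn : r ≤ n) :
    {k | ∃ ℓ j : ℕ, (ℓ, j) ∈ C ∧ ℓ ≤ r ∧ k = j + AL C (r - ℓ)}.Nonempty ∧
    AL C r = sInf {k | ∃ ℓ j : ℕ, (ℓ, j) ∈ C ∧ ℓ ≤ r ∧ k = j + AL C (r - ℓ)} := by
  obtain ⟨h11, hpos⟩ := hC
  set S := {k | ∃ ℓ j : ℕ, (ℓ, j) ∈ C ∧ ℓ ≤ r ∧ k = j + AL C (r - ℓ)} with hS
  have hSne : S.Nonempty := ⟨1 + AL C (r - 1), 1, 1, h11, hr1, rfl⟩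
  refine ⟨hSne, le_antisymm ?_ ?_⟩
  · -- AL C r ≤ sInf S
    obtain ⟨ℓ, j, hmem, hlr, hk⟩ := Nat.sInf_mem hSne
    rw [hk]
    obtain ⟨x, hx1, hx2⟩ := AL_spec C h11 (r - ℓ)
    set x' : ℕ × ℕ → ℕ := fun q => x q + (if q = (ℓ, j) then 1 else 0) with hx'
    have key : ∀ f : ℕ × ℕ → ℕ,
        ∑ q ∈ C, f q * x' q = (∑ q ∈ C, f q * x q) + f (ℓ, j) := by
      intro f
      simp only [hx', mul_add, Finset.sum_add_distrib, sum_ite_pt C hmem, mul_one]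
    have h1 := key (fun q => q.1)
    have h2 := key (fun q => q.2)
    have hle : AL C r ≤ ∑ q ∈ C, q.2 * x' q := by
      apply AL_le
      rw [h1]; omega
    rw [h2, ← hx2] at hle
    omega
  · -- sInf S ≤ AL C r
    obtain ⟨x, hx1, hx2⟩ := AL_spec C h11 r
    have hsumne : ∑ q ∈ C, q.1 * x q ≠ 0 := by omega
    obtain ⟨p, hp, hne⟩ := Finset.exists_ne_zero_of_sum_ne_zero hsumne
    obtain ⟨hj0, hjl⟩ := hpos p hp
    have hxp : 1 ≤ x p := by
      rcases Nat.eq_zero_or_pos (x p) with h | h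
      · exfalso; exact hne (by rw [h, mul_zero])
      · exact h
    have hjAL : p.2 ≤ AL C r := by
      have h1 : p.2 ≤ p.2 * x p := Nat.le_mul_of_pos_right _ (by omega)
      have h2 : p.2 * x p ≤ ∑ q ∈ C, q.2 * x q :=
        Finset.single_le_sum (f := fun q => q.2 * x q) (fun i _ => Nat.zero_le _) hp
      omega
    by_cases hcase : p.1 ≤ r
    · -- remove one copy of p
      set x' : ℕ × ℕ → ℕ := fun q => if q = p then x q - 1 else x q with hx'
      obtain ⟨m, hm⟩ : ∃ m, x p = m + 1 := ⟨x p - 1, by omega⟩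
      have key : ∀ f : ℕ × ℕ → ℕ,
          ∑ q ∈ C, f q * x q = f p + ∑ q ∈ C, f q * x' q := by
        intro f
        rw [← Finset.add_sum_erase C (fun q => f q * x q) hp,
            ← Finset.add_sum_erase C (fun q => f q * x' q) hp]
        have h2 : ∑ q ∈ C.erase p, f q * x' q = ∑ q ∈ C.erase p, f q * x q :=
          Finset.sum_congr rfl (fun q hq => by
            rw [show x' q = x q from if_neg (Finset.ne_of_mem_erase hq)])
        have h1 : x' p = m := by rw [hx']; simp [hm]
        rw [h1, h2, hm, mul_add, mul_one]
        ring
      have h1 := key (fun q => q.1)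
      have h2 := key (fun q => q.2)
      have hle : AL C (r - p.1) ≤ ∑ q ∈ C, q.2 * x' q := by
        apply AL_le; omega
      have hmemS : p.2 + AL C (r - p.1) ∈ S := ⟨p.1, p.2, by simpa using hp, hcase, rfl⟩
      have := Nat.sInf_le hmemS
      omega
    · push_neg at hcase
      by_cases hjr : p.2 ≤ r
      · have hmem2 : (r, p.2) ∈ C := hcomp p hp r hjr (le_min (le_of_lt hcase) hrn)
        have hmemS : p.2 + AL C (r - r) ∈ S := ⟨r, p.2, hmem2, le_refl r, rfl⟩
        have := Nat.sInf_le hmemS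
        rw [Nat.sub_self, AL_zero] at this
        omega
      · have hmemS : 1 + AL C (r - 1) ∈ S := ⟨1, 1, h11, hr1, rfl⟩
        have h1 := Nat.sInf_le hmemS
        have h2 := AL_le_self C h11 (r - 1)
        omega
end

section
/- Let C be a set-consensus collection, let (ℓ,j) ∈ C, and let (ℓ',j') be a pair of positive integers with j' ≤ ℓ' that is dominated by (ℓ,j), i.e., ℓ' ≤ ℓ and j ≤ j'. Then adding the dominated pair does not change any agreement level: for every n ∈ ℕ, AL_n^{C ∪ {(ℓ',j')}} = AL_n^C. -/
theorem stmt_7 (C : Finset (ℕ × ℕ)) (hC : IsSCC C) (ℓ j ℓ' j' : ℕ)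
    (hmem : (ℓ, j) ∈ C) (hj' : 0 < j') (hj'ℓ' : j' ≤ ℓ')
    (hdom : ℓ' ≤ ℓ ∧ j ≤ j') (n : ℕ) :
    AL (insert (ℓ', j') C) n = AL C n := by
  by_cases hin : (ℓ', j') ∈ C
  · rw [Finset.insert_eq_self.mpr hin]
  have hneC : {k | ∃ x : ℕ × ℕ → ℕ, n ≤ ∑ p ∈ C, p.1 * x p ∧
      k = ∑ p ∈ C, p.2 * x p}.Nonempty := by
    refine ⟨∑ p ∈ C, p.2 * n, fun _ => n, ?_, rfl⟩
    calc n = (1 : ℕ) * n := (one_mul n).symm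
      _ ≤ ∑ p ∈ C, p.1 * n :=
        Finset.single_le_sum (f := fun p : ℕ × ℕ => p.1 * n)
          (fun p _ => Nat.zero_le _) hC.1
  have hneI : {k | ∃ x : ℕ × ℕ → ℕ, n ≤ ∑ p ∈ insert (ℓ', j') C, p.1 * x p ∧
      k = ∑ p ∈ insert (ℓ', j') C, p.2 * x p}.Nonempty := by
    refine ⟨∑ p ∈ insert (ℓ', j') C, p.2 * n, fun _ => n, ?_, rfl⟩
    calc n = (1 : ℕ) * n := (one_mul n).symm
      _ ≤ ∑ p ∈ insert (ℓ', j') C, p.1 * n :=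
        Finset.single_le_sum (f := fun p : ℕ × ℕ => p.1 * n)
          (fun p _ => Nat.zero_le _) (Finset.mem_insert_of_mem hC.1)
  apply le_antisymm
  · -- AL insert ≤ AL C
    obtain ⟨x, hx1, hx2⟩ := Nat.sInf_mem hneC
    apply Nat.sInf_le
    refine ⟨Function.update x (ℓ', j') 0, ?_, ?_⟩
    · have h : ∑ p ∈ C, p.1 * Function.update x (ℓ', j') 0 p = ∑ p ∈ C, p.1 * x p :=
        Finset.sum_congr rfl fun p hp => by
          rw [Function.update_of_ne (by rintro rfl; exact hin hp)]
      rw [Finset.sum_insert hin, Function.update_self, h, Nat.mul_zero, Nat.zero_add]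
      exact hx1
    · have h : ∑ p ∈ C, p.2 * Function.update x (ℓ', j') 0 p = ∑ p ∈ C, p.2 * x p :=
        Finset.sum_congr rfl fun p hp => by
          rw [Function.update_of_ne (by rintro rfl; exact hin hp)]
      rw [Finset.sum_insert hin, Function.update_self, h, Nat.mul_zero, Nat.zero_add]
      exact hx2
  · -- AL C ≤ AL insert
    obtain ⟨x, hx1, hx2⟩ := Nat.sInf_mem hneI
    set y : ℕ × ℕ → ℕ := Function.update x (ℓ, j) (x (ℓ, j) + x (ℓ', j')) with hy
    have hy1 : ∑ p ∈ C, p.1 * y p = (∑ p ∈ C, p.1 * x p) + ℓ * x (ℓ', j') := by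
      rw [← Finset.add_sum_erase C (fun p => p.1 * y p) hmem,
          ← Finset.add_sum_erase C (fun p => p.1 * x p) hmem]
      have h : ∑ p ∈ C.erase (ℓ, j), p.1 * y p = ∑ p ∈ C.erase (ℓ, j), p.1 * x p :=
        Finset.sum_congr rfl fun p hp => by
          rw [hy, Function.update_of_ne (Finset.ne_of_mem_erase hp)]
      rw [h, hy, Function.update_self]
      ring
    have hy2 : ∑ p ∈ C, p.2 * y p = (∑ p ∈ C, p.2 * x p) + j * x (ℓ', j') := by
      rw [← Finset.add_sum_erase C (fun p => p.2 * y p) hmem,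
          ← Finset.add_sum_erase C (fun p => p.2 * x p) hmem]
      have h : ∑ p ∈ C.erase (ℓ, j), p.2 * y p = ∑ p ∈ C.erase (ℓ, j), p.2 * x p :=
        Finset.sum_congr rfl fun p hp => by
          rw [hy, Function.update_of_ne (Finset.ne_of_mem_erase hp)]
      rw [h, hy, Function.update_self]
      ring
    rw [Finset.sum_insert hin] at hx1
    simp only [Prod.fst] at hx1
    have h1 : n ≤ ∑ p ∈ C, p.1 * y p := by
      have := Nat.mul_le_mul_right (x (ℓ', j')) hdom.1
      clear hx2
      omega
    have h2 : ∑ p ∈ C, p.2 * y p ≤ AL (insert (ℓ', j') C) n := by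
      have hmono := Nat.mul_le_mul_right (x (ℓ', j')) hdom.2
      show _ ≤ sInf _
      rw [hx2, Finset.sum_insert hin]
      simp only [Prod.snd]
      clear hx2
      omega
    exact le_trans (Nat.sInf_le ⟨y, h1, rfl⟩) h2
end

section
/- Let C be a set-consensus collection and n ≥ 1. Define the completion of C for n as Ĉ = C ∪ {(r,j) : (ℓ,j) ∈ C, j ≤ r ≤ min(ℓ,n)}. Then Ĉ is a set-consensus collection that is complete for n, and the completion preserves all agreement levels: for every r ∈ ℕ, AL_r^{Ĉ} = AL_r^C. -/
/-- The completion of `C` for `n`: `C ∪ {(r, j) : (ℓ, j) ∈ C, j ≤ r ≤ min ℓ n}`. -/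
def completion (C : Finset (ℕ × ℕ)) (n : ℕ) : Finset (ℕ × ℕ) :=
  C ∪ C.biUnion (fun p => (Finset.Icc p.2 (min p.1 n)).image (fun r => (r, p.2)))

/-- A choice of a "source" in `C` for each pair in the completion. -/
noncomputable def sig (C : Finset (ℕ × ℕ)) (p : ℕ × ℕ) : ℕ × ℕ :=
  if h : ∃ q ∈ C, q.2 = p.2 ∧ p.1 ≤ q.1 then h.choose else p

lemma sig_ex {C : Finset (ℕ × ℕ)} {n : ℕ} {p : ℕ × ℕ} (hp : p ∈ completion C n) :
    ∃ q ∈ C, q.2 = p.2 ∧ p.1 ≤ q.1 := by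
  simp only [completion, Finset.mem_union, Finset.mem_biUnion, Finset.mem_image,
    Finset.mem_Icc] at hp
  rcases hp with hp | ⟨q, hq, r, ⟨hr1, hr2⟩, hrp⟩
  · exact ⟨p, hp, rfl, le_refl _⟩
  · subst hrp
    exact ⟨q, hq, rfl, hr2.trans (min_le_left _ _)⟩

lemma sig_spec {C : Finset (ℕ × ℕ)} {n : ℕ} {p : ℕ × ℕ} (hp : p ∈ completion C n) :
    sig C p ∈ C ∧ (sig C p).2 = p.2 ∧ p.1 ≤ (sig C p).1 := by
  have h := sig_ex hp
  rw [sig, dif_pos h]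
  obtain ⟨hq, h2, h3⟩ := h.choose_spec
  exact ⟨hq, h2, h3⟩

theorem stmt_8 (C : Finset (ℕ × ℕ)) (hC : IsSCC C) (n : ℕ) (hn : 1 ≤ n) :
    IsSCC (completion C n) ∧ CompleteFor (completion C n) n ∧
    ∀ r : ℕ, AL (completion C n) r = AL C r := by
  have hsub : C ⊆ completion C n := Finset.subset_union_left
  refine ⟨⟨hsub hC.1, ?_⟩, ?_, ?_⟩
  · intro p hp
    rcases Finset.mem_union.1 hp with h | h
    · exact hC.2 p h
    · simp only [Finset.mem_biUnion, Finset.mem_image, Finset.mem_Icc] at h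
      obtain ⟨q, hq, r, ⟨h1, h2⟩, rfl⟩ := h
      exact ⟨(hC.2 q hq).1, h1⟩
  · intro p hp r hjr hrn
    obtain ⟨hqC, hq2, hq1⟩ := sig_spec hp
    apply Finset.mem_union_right
    refine Finset.mem_biUnion.2 ⟨sig C p, hqC, Finset.mem_image.2 ⟨r, ?_, by rw [hq2]⟩⟩
    refine Finset.mem_Icc.2 ⟨hq2 ▸ hjr, le_min ((le_min_iff.1 hrn).1.trans hq1)
      (le_min_iff.1 hrn).2⟩
  · intro r
    unfold AL
    congr 1
    ext k
    simp only [Set.mem_setOf_eq]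
    constructor
    · rintro ⟨x, hx1, hx2⟩
      -- push mass back to sources in C
      set y : ℕ × ℕ → ℕ := fun q =>
        ∑ p ∈ (completion C n).filter (fun p => sig C p = q), x p with hy
      have hmaps : ∀ p ∈ completion C n, sig C p ∈ C := fun p hp => (sig_spec hp).1
      have key : ∀ f : ℕ × ℕ → ℕ,
          ∑ q ∈ C, f q * y q = ∑ p ∈ completion C n, f (sig C p) * x p := by
        intro f
        rw [← Finset.sum_fiberwise_of_maps_to hmaps (fun p => f (sig C p) * x p)]
        refine Finset.sum_congr rfl fun q hq => ?_
        rw [hy, Finset.mul_sum]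
        exact Finset.sum_congr rfl fun p hp => by
          rw [(Finset.mem_filter.1 hp).2]
      refine ⟨y, ?_, ?_⟩
      · calc r ≤ ∑ p ∈ completion C n, p.1 * x p := hx1
          _ ≤ ∑ p ∈ completion C n, (sig C p).1 * x p :=
            Finset.sum_le_sum fun p hp =>
              Nat.mul_le_mul_right _ (sig_spec hp).2.2
          _ = ∑ q ∈ C, q.1 * y q := (key _).symm
      · rw [hx2, key (fun q => q.2)]
        exact (Finset.sum_congr rfl fun p hp => by rw [(sig_spec hp).2.1]).symm
    · rintro ⟨x, hx1, hx2⟩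
      refine ⟨fun p => if p ∈ C then x p else 0, ?_, ?_⟩
      · rw [← Finset.sum_subset hsub (fun p _ hp => by simp [hp])]
        calc r ≤ ∑ p ∈ C, p.1 * x p := hx1
          _ = _ := Finset.sum_congr rfl fun p hp => by simp [hp]
      · rw [← Finset.sum_subset hsub (fun p _ hp => by simp [hp])]
        rw [hx2]
        exact Finset.sum_congr rfl fun p hp => by simp [hp]
end

section
/- Let ℓ and j be positive integers with j ≤ ℓ, and let C = {(1,1),(ℓ,j)}. Then for every n ∈ ℕ, the agreement level has the closed form AL_n^C = j·⌊n/ℓ⌋ + min(j, n mod ℓ). -/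
theorem stmt_9 (ℓ j : ℕ) (hj : 0 < j) (hjℓ : j ≤ ℓ) (n : ℕ) :
    AL ({(1, 1), (ℓ, j)} : Finset (ℕ × ℕ)) n = j * (n / ℓ) + min j (n % ℓ) := by
  have hℓ : 0 < ℓ := lt_of_lt_of_le hj hjℓ
  set q := n / ℓ with hq
  set r := n % ℓ with hr
  have hn : ℓ * q + r = n := Nat.div_add_mod n ℓ
  have hrℓ : r < ℓ := Nat.mod_lt n hℓ
  by_cases hcase : (ℓ, j) = (1, 1)
  · rw [Prod.mk.injEq] at hcase
    obtain ⟨rfl, rfl⟩ := hcase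
    have hset : ({(1, 1), (1, 1)} : Finset (ℕ × ℕ)) = {(1, 1)} := by decide
    rw [hset]
    have hS : {k | ∃ x : ℕ × ℕ → ℕ, n ≤ ∑ p ∈ ({(1,1)} : Finset (ℕ × ℕ)), p.1 * x p ∧
        k = ∑ p ∈ ({(1,1)} : Finset (ℕ × ℕ)), p.2 * x p} = Set.Ici n := by
      ext k
      simp only [Finset.sum_singleton, Set.mem_setOf_eq, one_mul, Set.mem_Ici]
      constructor
      · rintro ⟨x, h1, rfl⟩; exact h1
      · intro h; exact ⟨fun _ => k, h, rfl⟩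
    rw [AL, hS, csInf_Ici]
    omega
  · have hne : (1, 1) ≠ (ℓ, j) := fun h => hcase h.symm
    have hsum : ∀ (f : ℕ × ℕ → ℕ), ∑ p ∈ ({(1, 1), (ℓ, j)} : Finset (ℕ × ℕ)), f p
        = f (1, 1) + f (ℓ, j) := fun f => Finset.sum_pair hne
    rw [AL]
    apply le_antisymm
    · -- upper bound: explicit witness
      apply Nat.sInf_le
      by_cases hrj : r ≤ j
      · refine ⟨fun p => if p = (ℓ, j) then q else r, ?_, ?_⟩ <;>
        · rw [hsum]; beta_reduce; rw [if_pos rfl, if_neg hne]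
          simp only [one_mul]
          omega
      · refine ⟨fun p => if p = (ℓ, j) then q + 1 else 0, ?_, ?_⟩ <;>
        · rw [hsum]; beta_reduce; rw [if_pos rfl, if_neg hne]
          simp only [one_mul]
          have e1 : ℓ * (q + 1) = ℓ * q + ℓ := by ring
          have e2 : j * (q + 1) = j * q + j := by ring
          omega
    · -- lower bound
      apply le_csInf
      · exact ⟨1 * n + j * n, fun _ => n, by rw [hsum]; simp, by rw [hsum]⟩
      · rintro k ⟨x, h1, rfl⟩
        rw [hsum] at h1 ⊢
        simp only [one_mul] at h1 ⊢
        set a := x (1, 1)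
        set b := x (ℓ, j)
        by_cases hbq : b ≤ q
        · have h2 : ℓ * b ≤ ℓ * q := Nat.mul_le_mul_left ℓ hbq
          have h3 : ℓ * (q - b) + ℓ * b = ℓ * q := by
            rw [← Nat.mul_add, Nat.sub_add_cancel hbq]
          have h4 : j * (q - b) + j * b = j * q := by
            rw [← Nat.mul_add, Nat.sub_add_cancel hbq]
          have h5 : j * (q - b) ≤ ℓ * (q - b) := Nat.mul_le_mul_right _ hjℓ
          omega
        · have h2 : j * (q + 1) ≤ j * b := Nat.mul_le_mul_left j (by omega)
          have h3 : j * (q + 1) = j * q + j := by ring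
          omega
end

section
/- Let C be a set-consensus collection and j ≥ 1. Then SCN_j^C is the value of the classical unbounded Knapsack optimization problem: SCN_j^C = max{ ∑_{(ℓ,s)∈C} ℓ·x(ℓ,s) : x : C → ℕ, ∑_{(ℓ,s)∈C} s·x(ℓ,s) ≤ j }, and this maximum is attained. -/
/-- The `j`-set-consensus number `SCN_j^C`: the maximum `n` such that `AL_n^C ≤ j`. -/
noncomputable def SCN (C : Finset (ℕ × ℕ)) (j : ℕ) : ℕ :=
  sSup {n | AL C n ≤ j}

lemma value_le_bound (C : Finset (ℕ × ℕ)) (hC : IsSCC C) (x : ℕ × ℕ → ℕ) :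
    ∑ p ∈ C, p.1 * x p ≤ C.sup Prod.fst * ∑ p ∈ C, p.2 * x p := by
  rw [Finset.mul_sum]
  refine Finset.sum_le_sum fun p hp => ?_
  have h1 : p.1 ≤ C.sup Prod.fst := Finset.le_sup hp
  have h2 : 1 ≤ p.2 := (hC.2 p hp).1
  calc p.1 * x p ≤ C.sup Prod.fst * x p := Nat.mul_le_mul_right _ h1
    _ ≤ C.sup Prod.fst * (p.2 * x p) := by
        rw [← mul_assoc]
        exact Nat.mul_le_mul_right _ (by nlinarith)

theorem stmt_14 (C : Finset (ℕ × ℕ)) (hC : IsSCC C) (j : ℕ) (hj : 1 ≤ j) :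
    SCN C j =
      sSup {n | ∃ x : ℕ × ℕ → ℕ, ∑ p ∈ C, p.2 * x p ≤ j ∧ n = ∑ p ∈ C, p.1 * x p} ∧
    (∃ x : ℕ × ℕ → ℕ, ∑ p ∈ C, p.2 * x p ≤ j ∧ SCN C j = ∑ p ∈ C, p.1 * x p) := by
  obtain ⟨h11, hpos⟩ := hC
  set L := C.sup Prod.fst with hL
  set B : Set ℕ := {n | ∃ x : ℕ × ℕ → ℕ, ∑ p ∈ C, p.2 * x p ≤ j ∧ n = ∑ p ∈ C, p.1 * x p}
    with hB
  have hBne : B.Nonempty := ⟨0, fun _ => 0, by simp⟩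
  have hBbdd : BddAbove B := by
    refine ⟨L * j, fun n hn => ?_⟩
    obtain ⟨x, hc, hv⟩ := hn
    calc n = ∑ p ∈ C, p.1 * x p := hv
      _ ≤ L * ∑ p ∈ C, p.2 * x p := value_le_bound C ⟨h11, hpos⟩ x
      _ ≤ L * j := Nat.mul_le_mul_left _ hc
  -- characterization of AL ≤ j
  have hALle : ∀ n : ℕ, AL C n ≤ j ↔
      ∃ x : ℕ × ℕ → ℕ, ∑ p ∈ C, p.2 * x p ≤ j ∧ n ≤ ∑ p ∈ C, p.1 * x p := by
    intro n
    constructor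
    · intro h
      have hne : {k | ∃ x : ℕ × ℕ → ℕ,
          n ≤ ∑ p ∈ C, p.1 * x p ∧ k = ∑ p ∈ C, p.2 * x p}.Nonempty := by
        refine ⟨∑ p ∈ C, p.2 * (fun p => if p = (1,1) then n else 0) p,
          fun p => if p = (1,1) then n else 0, ?_, rfl⟩
        have : ∑ p ∈ C, p.1 * (if p = (1,1) then n else 0) = n := by
          rw [show (fun p : ℕ × ℕ => p.1 * (if p = (1,1) then n else 0)) =
              fun p => if p = (1,1) then p.1 * n else 0 by
            funext p; split <;> simp]
          rw [Finset.sum_ite_eq' C ((1,1) : ℕ × ℕ) (fun p => p.1 * n), if_pos h11, one_mul]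
        simpa using this.ge
      obtain ⟨x, hx1, hx2⟩ := Nat.sInf_mem hne
      exact ⟨x, by rw [← hx2]; exact h, hx1⟩
    · rintro ⟨x, hc, hv⟩
      exact le_trans (Nat.sInf_le ⟨x, hv, rfl⟩) hc
  set A : Set ℕ := {n | AL C n ≤ j} with hA
  have hAne : A.Nonempty := ⟨0, (hALle 0).2 ⟨fun _ => 0, by simp⟩⟩
  -- the max of B is attained
  obtain ⟨x₀, hx₀c, hx₀v⟩ := Nat.sSup_mem hBne hBbdd
  have hMA : sSup B ∈ A := (hALle _).2 ⟨x₀, hx₀c, hx₀v.le⟩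
  have hAle : ∀ n ∈ A, n ≤ sSup B := by
    intro n hn
    obtain ⟨x, hc, hv⟩ := (hALle n).1 hn
    exact le_trans hv (le_csSup hBbdd ⟨x, hc, rfl⟩)
  have hAbdd : BddAbove A := ⟨sSup B, hAle⟩
  have hEq : SCN C j = sSup B :=
    le_antisymm (csSup_le hAne hAle) (le_csSup hAbdd hMA)
  exact ⟨hEq, x₀, hx₀c, hEq.trans hx₀v⟩
end
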